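/- Let ε, Δt > 0 and μ ∈ ℝ. Suppose V : ℝ → ℂ² is C¹ and 2π-periodic, W : ℝ → ℂ² is continuous, and Q(V)(τ) = W(τ) for all τ, where Q(V)(τ) := V(τ) + (Δt/ε) iμ A(τ) V(τ) + (Δt/ε²) V′(τ). Then for every τ ∈ ℝ, ‖V(τ)‖ ≤ sup_{s ∈ [0,2π]} ‖W(s)‖, where ‖·‖ denotes the Euclidean norm on ℂ². In particular, the operator Q is injective on C¹ 2π-periodic functions. -/

import Mathlib

open Real Complex Matrix

/-- `A(τ) = [[0, e^{2iτ}],[e^{−2iτ}, 0]]`. -/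
noncomputable def Amat (τ : ℝ) : Matrix (Fin 2) (Fin 2) ℂ :=
  !![0, Complex.exp (2 * Complex.I * τ); Complex.exp (-2 * Complex.I * τ), 0]

/-- The Euclidean norm on `ℂ²`. -/
noncomputable def enorm2 (v : Fin 2 → ℂ) : ℝ :=
  Real.sqrt (Complex.normSq (v 0) + Complex.normSq (v 1))

/-- The operator `Q(V)(τ) = V(τ) + (Δt/ε) iμ A(τ) V(τ) + (Δt/ε²) V′(τ)`. -/
noncomputable def Qop (ε Δt μ : ℝ) (V : ℝ → Fin 2 → ℂ) (τ : ℝ) : Fin 2 → ℂ :=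
  V τ + ((Δt / ε : ℝ) : ℂ) • (Complex.I * (μ : ℂ)) • (Amat τ).mulVec (V τ) +
    ((Δt / ε ^ 2 : ℝ) : ℂ) • deriv V τ

/-!
At a point τ₀ where the periodic function `‖V‖` is maximal, the derivative of `‖V‖²` vanishes,
so `Re ⟪V, V'⟫ = 0`, and `Re ⟪V, iμ A V⟫ = 0` because `A(τ₀)` is Hermitian. Pairing
`Q(V)(τ₀) = W(τ₀)` with `V(τ₀)` therefore leaves `‖V(τ₀)‖² = Re ⟪V(τ₀), W(τ₀)⟫ ≤ ‖V(τ₀)‖ ‖W(τ₀)‖`.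
Injectivity follows by applying this to the difference of two solutions, `Q` being linear.
-/

open Function Set WithLp

open scoped RealInnerProductSpace

theorem Function.Periodic.exists_mem_Icc_forall_ge {α : Type*} [LinearOrder α]
    [TopologicalSpace α] [OrderClosedTopology α] {f : ℝ → α} {T : ℝ} (hf : Periodic f T)
    (hT : 0 < T) (hc : Continuous f) : ∃ x ∈ Icc 0 T, ∀ t, f t ≤ f x := by
  obtain ⟨x, hx, hmax⟩ :=
    isCompact_Icc.exists_isMaxOn (nonempty_Icc.mpr hT.le) hc.continuousOn
  refine ⟨x, hx, fun t => ?_⟩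
  obtain ⟨y, hy, hyt⟩ := hf.exists_mem_Ico₀ hT t
  exact hyt ▸ hmax (Ico_subset_Icc_self hy)

theorem norm_le_of_isLocalMax_of_add_add_smul_eq {F : Type*} [NormedAddCommGroup F]
    [InnerProductSpace ℝ F] {U : ℝ → F} {x c : ℝ} {u' b w : F} (hU : HasDerivAt U u' x)
    (hmax : IsLocalMax (‖U ·‖) x) (hb : ⟪U x, b⟫ = 0) (heq : U x + b + c • u' = w) :
    ‖U x‖ ≤ ‖w‖ := by
  have hmax_sq : IsLocalMax (‖U ·‖ ^ 2) x :=
    hmax.mono fun _ h => pow_le_pow_left₀ (norm_nonneg _) h 2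
  have hu' : ⟪U x, u'⟫ = 0 := by
    have := hmax_sq.hasDerivAt_eq_zero hU.norm_sq
    linarith
  have hw : ‖U x‖ ^ 2 = ⟪U x, w⟫ := by
    rw [← heq, inner_add_right, inner_add_right, real_inner_smul_right, hb, hu',
      real_inner_self_eq_norm_sq]
    ring
  have := hw.trans_le (real_inner_le_norm (U x) w)
  nlinarith [norm_nonneg (U x), norm_nonneg w]

/-- The real inner product on `EuclideanSpace ℂ ι` comes from `PiLp`, not from
`Inner.rclikeToReal`, so the general `real_inner_eq_re_inner` does not apply to it. -/
theorem EuclideanSpace.real_inner_eq_re_inner {ι : Type*} [Fintype ι]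
    (x y : EuclideanSpace ℂ ι) : ⟪x, y⟫ = (inner ℂ x y).re := by
  simp [PiLp.inner_apply, Complex.inner, Complex.re_sum]

theorem Matrix.IsHermitian.real_inner_toLp_smul_mulVec_self {n : Type*} [Fintype n]
    {A : Matrix n n ℂ} (hA : A.IsHermitian) {z : ℂ} (hz : z.re = 0) (v : n → ℂ) :
    ⟪toLp 2 v, toLp 2 (z • A *ᵥ v)⟫ = 0 := by
  have hreal : (star v ⬝ᵥ A *ᵥ v).im = 0 := hA.im_star_dotProduct_mulVec_self v
  rw [EuclideanSpace.real_inner_eq_re_inner, toLp_smul, inner_smul_right,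
    EuclideanSpace.inner_toLp_toLp, dotProduct_comm, Complex.mul_re, hz, hreal]
  ring

theorem Amat_isHermitian (τ : ℝ) : (Amat τ).IsHermitian := by
  ext i j
  fin_cases i <;> fin_cases j <;>
    simp [Amat, ← Complex.exp_conj, map_mul, map_neg, map_ofNat, Complex.conj_ofReal]

theorem enorm2_eq_norm_toLp (v : Fin 2 → ℂ) : enorm2 v = ‖toLp 2 v‖ := by
  simp [enorm2, EuclideanSpace.norm_eq, Fin.sum_univ_two, Complex.sq_norm]

theorem Qop_sub {ε Δt μ : ℝ} {V₁ V₂ : ℝ → Fin 2 → ℂ} {τ : ℝ} (h₁ : DifferentiableAt ℝ V₁ τ)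
    (h₂ : DifferentiableAt ℝ V₂ τ) :
    Qop ε Δt μ (V₁ - V₂) τ = Qop ε Δt μ V₁ τ - Qop ε Δt μ V₂ τ := by
  simp only [Qop, deriv_sub h₁ h₂, Pi.sub_apply, Matrix.mulVec_sub, smul_sub]
  abel

theorem exists_mem_Icc_forall_enorm2_le_enorm2_Qop (ε Δt μ : ℝ) {V : ℝ → Fin 2 → ℂ}
    (hV : Differentiable ℝ V) {T : ℝ} (hT : 0 < T) (hVper : Periodic V T) :
    ∃ τ₀ ∈ Icc 0 T, ∀ τ, enorm2 (V τ) ≤ enorm2 (Qop ε Δt μ V τ₀) := by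
  set U : ℝ → EuclideanSpace ℂ (Fin 2) := fun t => toLp 2 (V t)
  have hU : ∀ t, HasDerivAt U (toLp 2 (deriv V t)) t := fun t =>
    (PiLp.hasFDerivAt_toLp (𝕜 := ℝ) 2 (V t)).comp_hasDerivAt t (hV t).hasDerivAt
  obtain ⟨τ₀, hτ₀, hmax⟩ := (hVper.comp (fun v => ‖toLp 2 v‖)).exists_mem_Icc_forall_ge hT
    (continuous_iff_continuousAt.mpr fun t => (hU t).continuousAt.norm)
  refine ⟨τ₀, hτ₀, fun τ => ?_⟩
  have hskew : ⟪U τ₀, toLp 2 (((Δt / ε : ℝ) : ℂ) • (Complex.I * μ) • Amat τ₀ *ᵥ V τ₀)⟫ = 0 := by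
    rw [smul_smul]
    exact (Amat_isHermitian τ₀).real_inner_toLp_smul_mulVec_self (by simp) _
  have hQ : U τ₀ + toLp 2 (((Δt / ε : ℝ) : ℂ) • (Complex.I * μ) • Amat τ₀ *ᵥ V τ₀) +
      (Δt / ε ^ 2) • toLp 2 (deriv V τ₀) = toLp 2 (Qop ε Δt μ V τ₀) := by
    simp only [U, Qop, toLp_add, toLp_smul, Complex.coe_smul]
  rw [enorm2_eq_norm_toLp, enorm2_eq_norm_toLp]
  exact (hmax τ).trans (norm_le_of_isLocalMax_of_add_add_smul_eq (hU τ₀)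
    (Filter.Eventually.of_forall hmax) hskew hQ)

theorem stmt_15_general (ε Δt : ℝ) (μ : ℝ)
    (V : ℝ → Fin 2 → ℂ) (hV : ContDiff ℝ 1 V) (hVper : Function.Periodic V (2 * π))
    (W : ℝ → Fin 2 → ℂ) (hWc : Continuous W)
    (hQ : ∀ τ : ℝ, Qop ε Δt μ V τ = W τ) :
    (∀ τ : ℝ, enorm2 (V τ) ≤ sSup ((fun s => enorm2 (W s)) '' Set.Icc 0 (2 * π))) ∧
    (∀ V₁ V₂ : ℝ → Fin 2 → ℂ, ContDiff ℝ 1 V₁ → ContDiff ℝ 1 V₂ →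
      Function.Periodic V₁ (2 * π) → Function.Periodic V₂ (2 * π) →
      (∀ τ : ℝ, Qop ε Δt μ V₁ τ = Qop ε Δt μ V₂ τ) → V₁ = V₂) := by
  refine ⟨fun τ => ?_, fun V₁ V₂ h₁ h₂ hp₁ hp₂ hQ₁₂ => ?_⟩
  · obtain ⟨τ₀, hτ₀, hmax⟩ := exists_mem_Icc_forall_enorm2_le_enorm2_Qop ε Δt μ
      (hV.differentiable one_ne_zero) two_pi_pos hVper
    have hbdd : BddAbove ((fun s => enorm2 (W s)) '' Icc 0 (2 * π)) := by
      simp only [enorm2_eq_norm_toLp]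
      exact (isCompact_Icc.image ((PiLp.continuous_toLp 2 _).comp hWc).norm).bddAbove
    calc enorm2 (V τ) ≤ enorm2 (W τ₀) := hQ τ₀ ▸ hmax τ
      _ ≤ _ := le_csSup hbdd ⟨τ₀, hτ₀, rfl⟩
  · have hd₁ := h₁.differentiable one_ne_zero
    have hd₂ := h₂.differentiable one_ne_zero
    obtain ⟨τ₀, -, hmax⟩ := exists_mem_Icc_forall_enorm2_le_enorm2_Qop ε Δt μ
      (hd₁.sub hd₂) two_pi_pos (hp₁.sub hp₂)
    have hzero : Qop ε Δt μ (V₁ - V₂) τ₀ = 0 := by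
      rw [Qop_sub (hd₁ τ₀) (hd₂ τ₀), hQ₁₂, sub_self]
    funext τ
    have hτ := hmax τ
    rwa [hzero, enorm2_eq_norm_toLp, enorm2_eq_norm_toLp, toLp_zero, norm_zero,
      norm_le_zero_iff, toLp_eq_zero, Pi.sub_apply, sub_eq_zero] at hτ

/-- If `V` is `C¹` and `2π`-periodic and `Q(V) = W` with `W`
continuous, then `‖V(τ)‖ ≤ sup_{s∈[0,2π]} ‖W(s)‖` for every `τ`; in particular,
`Q` is injective on `C¹` `2π`-periodic functions. -/
theorem stmt_15 (ε Δt : ℝ) (hε : 0 < ε) (hΔt : 0 < Δt) (μ : ℝ)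
    (V : ℝ → Fin 2 → ℂ) (hV : ContDiff ℝ 1 V) (hVper : Function.Periodic V (2 * π))
    (W : ℝ → Fin 2 → ℂ) (hWc : Continuous W)
    (hQ : ∀ τ : ℝ, Qop ε Δt μ V τ = W τ) :
    (∀ τ : ℝ, enorm2 (V τ) ≤ sSup ((fun s => enorm2 (W s)) '' Set.Icc 0 (2 * π))) ∧
    (∀ V₁ V₂ : ℝ → Fin 2 → ℂ, ContDiff ℝ 1 V₁ → ContDiff ℝ 1 V₂ →
      Function.Periodic V₁ (2 * π) → Function.Periodic V₂ (2 * π) →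
      (∀ τ : ℝ, Qop ε Δt μ V₁ τ = Qop ε Δt μ V₂ τ) → V₁ = V₂) :=
  stmt_15_general ε Δt μ V hV hVper W hWc hQ
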